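/- Let f ∈ C¹(ℝ) with f(t)=0 for t≤0, t f'(t) > f(t) for t>0, and let a₁>0 satisfy f'(a₁) ≤ V₀/2 where V₀ > 0. Define f̃(t) = f(t) for t ≤ a₁ and f̃(t) = f'(a₁)t + f(a₁) − f'(a₁)a₁ for t > a₁, and F̃(t) = ∫₀ᵗ f̃(s) ds. Then for every t > 0: 0 < 2F̃(t) < f̃(t)·t ≤ (V₀/2)·t². -/

import Mathlib

/-!
The condition `t f'(t) > f(t)` says exactly that `f(t)/t` is strictly increasing on `(0, ∞)`,
and since `f` vanishes on `(-∞, 0]` this ratio tends to `f'(0) = 0` at `0⁺`, so it is positive.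
Continuing `f` past `a₁` by its tangent line keeps the ratio strictly increasing (the tangent line
has negative intercept `f(a₁) - a₁ f'(a₁)`) and bounded by `f'(a₁)`. Positivity of the ratio gives
`F̃(t) > 0`; its monotonicity gives `f̃(s) < (f̃(t)/t) s` on `(0, t)`, which integrates to
`F̃(t) < f̃(t) t / 2`; the bound by `f'(a₁) ≤ V₀/2` gives the last inequality.
-/

open Set Filter Topology MeasureTheory intervalIntegral

theorem deriv_eq_zero_of_forall_le_eq_zero {f : ℝ → ℝ} {a : ℝ} (hf : DifferentiableAt ℝ f a)
    (h : ∀ t ≤ a, f t = 0) : deriv f a = 0 :=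
  (uniqueDiffWithinAt_Iic a).eq_deriv _ hf.hasDerivAt.hasDerivWithinAt <|
    (hasDerivWithinAt_const a (Iic a) 0).congr (fun t ht => h t ht) (h a le_rfl)

theorem tendsto_div_self_nhdsGT_zero {f : ℝ → ℝ} {f' : ℝ} (hf : HasDerivAt f f' 0) (h0 : f 0 = 0) :
    Tendsto (fun s => f s / s) (𝓝[>] 0) (𝓝 f') := by
  refine ((hasDerivAt_iff_tendsto_slope.mp hf).mono_left
    (nhdsWithin_mono _ fun s hs => ne_of_gt hs)).congr fun s => ?_
  simp [slope, h0, div_eq_inv_mul]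

theorem strictMonoOn_div_self_of_lt_mul_deriv {f : ℝ → ℝ} (hf : DifferentiableOn ℝ f (Ioi 0))
    (h : ∀ t > 0, f t < t * deriv f t) : StrictMonoOn (fun s => f s / s) (Ioi 0) := by
  refine strictMonoOn_of_deriv_pos (convex_Ioi 0)
    (hf.continuousOn.div continuousOn_id fun s hs => ne_of_gt hs) fun t ht => ?_
  rw [interior_Ioi] at ht
  have hft : DifferentiableAt ℝ f t := hf.differentiableAt (Ioi_mem_nhds ht)
  rw [deriv_fun_div hft differentiableAt_fun_id (ne_of_gt ht), deriv_id'']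
  have := h t ht
  exact div_pos (by linarith) (pow_pos ht 2)

theorem StrictMonoOn.lt_of_tendsto_nhdsGT {α β : Type*} [LinearOrder α] [TopologicalSpace α]
    [OrderTopology α] [DenselyOrdered α] [LinearOrder β] [TopologicalSpace β]
    [OrderClosedTopology β] {g : α → β} {a : α} {l : β} (hg : StrictMonoOn g (Ioi a))
    (hl : Tendsto g (𝓝[>] a) (𝓝 l)) {s : α} (hs : a < s) : l < g s := by
  obtain ⟨u, hau, hus⟩ := exists_between hs
  have : (𝓝[>] a).NeBot := nhdsGT_neBot_of_exists_gt ⟨s, hs⟩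
  have hlu : l ≤ g u := le_of_tendsto hl <| by
    filter_upwards [Ioo_mem_nhdsGT hau] with v hv
    exact (hg hv.1 hau hv.2).le
  exact hlu.trans_lt (hg hau hs hus)

theorem two_mul_integral_lt_of_div_lt {g : ℝ → ℝ} {t : ℝ} (hg : IntervalIntegrable g volume 0 t)
    (ht : 0 < t) (h : ∀ s ∈ Ioo 0 t, g s / s < g t / t) :
    2 * ∫ s in (0:ℝ)..t, g s < g t * t := by
  set c := g t / t
  have hlin : IntervalIntegrable (fun s => c * s) volume 0 t :=
    (continuous_const.mul continuous_id).intervalIntegrable 0 t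
  have hpos : 0 < ∫ s in (0:ℝ)..t, (c * s - g s) :=
    intervalIntegral_pos_of_pos_on (hlin.sub hg)
      (fun s hs => sub_pos.mpr ((div_lt_iff₀ hs.1).mp (h s hs))) ht
  rw [integral_sub hlin hg, intervalIntegral.integral_const_mul, integral_id] at hpos
  have hct : c * t ^ 2 = g t * t := by unfold c; field_simp
  nlinarith

noncomputable def tangentExtension (f : ℝ → ℝ) (a : ℝ) (t : ℝ) : ℝ :=
  if t ≤ a then f t else deriv f a * t + f a - deriv f a * a

section tangentExtension

variable {f : ℝ → ℝ} {a : ℝ}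

theorem continuous_tangentExtension (hf : Continuous f) : Continuous (tangentExtension f a) :=
  Continuous.if_le hf (by fun_prop) continuous_id continuous_const fun t ht => by
    subst ht; ring

theorem tangentExtension_eq_of_le {t : ℝ} (ht : t ≤ a) : tangentExtension f a t = f t := if_pos ht

theorem tangentExtension_div_self_of_le {t : ℝ} (hat : a ≤ t) (ht : t ≠ 0) :
    tangentExtension f a t / t = deriv f a - (a * deriv f a - f a) / t := by
  unfold tangentExtension
  split_ifs with h
  · obtain rfl : t = a := le_antisymm h hat
    field_simp; ring
  · field_simp; ring

theorem strictMonoOn_tangentExtension_div_self (hmono : StrictMonoOn (fun s => f s / s) (Ioi 0))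
    (ha : 0 < a) (hfa : f a < a * deriv f a) :
    StrictMonoOn (fun s => tangentExtension f a s / s) (Ioi 0) := by
  have hleft : StrictMonoOn (fun s => tangentExtension f a s / s) (Ioc 0 a) :=
    (hmono.mono Ioc_subset_Ioi_self).congr fun s hs => by
      simp only [tangentExtension_eq_of_le hs.2]
  have hright : StrictMonoOn (fun s => tangentExtension f a s / s) (Ici a) := by
    intro s hs t ht hst
    have hs0 : 0 < s := ha.trans_le hs
    simp only [tangentExtension_div_self_of_le hs hs0.ne',
      tangentExtension_div_self_of_le ht (hs0.trans hst).ne']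
    gcongr
  rw [← Ioc_union_Ici_eq_Ioi ha]
  exact hleft.union hright (isGreatest_Ioc ha) isLeast_Ici

theorem tangentExtension_le_deriv_mul (hmono : StrictMonoOn (fun s => f s / s) (Ioi 0))
    (ha : 0 < a) (hfa : f a < a * deriv f a) {t : ℝ} (ht : 0 < t) :
    tangentExtension f a t ≤ deriv f a * t := by
  suffices tangentExtension f a t / t ≤ deriv f a by rwa [div_le_iff₀ ht] at this
  rcases le_or_gt a t with hat | hta
  · rw [tangentExtension_div_self_of_le hat ht.ne', sub_le_self_iff]
    exact div_nonneg (by linarith) ht.le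
  · apply le_of_lt
    calc tangentExtension f a t / t < tangentExtension f a a / a :=
          strictMonoOn_tangentExtension_div_self hmono ha hfa ht ha hta
      _ ≤ deriv f a := by
          rw [tangentExtension_eq_of_le le_rfl, div_le_iff₀ ha]
          linarith

theorem tendsto_tangentExtension_div_self (ha : 0 < a) {l : ℝ}
    (hf : Tendsto (fun s => f s / s) (𝓝[>] 0) (𝓝 l)) :
    Tendsto (fun s => tangentExtension f a s / s) (𝓝[>] 0) (𝓝 l) :=
  hf.congr' <| by
    filter_upwards [Ioo_mem_nhdsGT ha] with s hs
    rw [tangentExtension_eq_of_le hs.2.le]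

end tangentExtension

theorem stmt2_general (f : ℝ → ℝ) (hf : ContDiff ℝ 1 f)
    (h0 : ∀ t ≤ (0:ℝ), f t = 0)
    (hsup : ∀ t > (0:ℝ), t * deriv f t > f t)
    (V₀ : ℝ)
    (a₁ : ℝ) (ha : 0 < a₁)
    (hV : deriv f a₁ ≤ V₀ / 2)
    (ftilde : ℝ → ℝ)
    (hdef : ∀ t, ftilde t =
      if t ≤ a₁ then f t else deriv f a₁ * t + f a₁ - deriv f a₁ * a₁) :
    ∀ t > (0:ℝ),
      0 < 2 * (∫ s in (0:ℝ)..t, ftilde s) ∧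
      2 * (∫ s in (0:ℝ)..t, ftilde s) < ftilde t * t ∧
      ftilde t * t ≤ V₀ / 2 * t ^ 2 := by
  intro t ht
  obtain rfl : ftilde = tangentExtension f a₁ := funext hdef
  have hfd : Differentiable ℝ f := hf.differentiable one_ne_zero
  have hmono := strictMonoOn_div_self_of_lt_mul_deriv hfd.differentiableOn hsup
  have hfa : f a₁ < a₁ * deriv f a₁ := hsup a₁ ha
  have hmono' := strictMonoOn_tangentExtension_div_self hmono ha hfa
  have hlim : Tendsto (fun s => tangentExtension f a₁ s / s) (𝓝[>] 0) (𝓝 0) := by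
    refine tendsto_tangentExtension_div_self ha (tendsto_div_self_nhdsGT_zero ?_ (h0 0 le_rfl))
    simpa [deriv_eq_zero_of_forall_le_eq_zero (hfd 0) h0] using (hfd 0).hasDerivAt
  have hint : IntervalIntegrable (tangentExtension f a₁) volume 0 t :=
    (continuous_tangentExtension hf.continuous).intervalIntegrable 0 t
  refine ⟨?_, two_mul_integral_lt_of_div_lt hint ht fun s hs => hmono' hs.1 ht hs.2, ?_⟩
  · refine mul_pos two_pos (intervalIntegral_pos_of_pos_on hint (fun s hs => ?_) ht)
    exact (div_pos_iff_of_pos_right hs.1).mp (hmono'.lt_of_tendsto_nhdsGT hlim hs.1)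
  · calc tangentExtension f a₁ t * t ≤ deriv f a₁ * t * t := by
          gcongr; exact tangentExtension_le_deriv_mul hmono ha hfa ht
      _ ≤ V₀ / 2 * t ^ 2 := by nlinarith

theorem stmt2 (f : ℝ → ℝ) (hf : ContDiff ℝ 1 f)
    (h0 : ∀ t ≤ (0:ℝ), f t = 0)
    (hsup : ∀ t > (0:ℝ), t * deriv f t > f t)
    (V₀ : ℝ) (hV₀ : 0 < V₀)
    (a₁ : ℝ) (ha : 0 < a₁)
    (hV : deriv f a₁ ≤ V₀ / 2)
    (hslope : ∀ t ≥ a₁, deriv f t ≥ deriv f a₁)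
    (ftilde : ℝ → ℝ)
    (hdef : ∀ t, ftilde t =
      if t ≤ a₁ then f t else deriv f a₁ * t + f a₁ - deriv f a₁ * a₁) :
    ∀ t > (0:ℝ),
      0 < 2 * (∫ s in (0:ℝ)..t, ftilde s) ∧
      2 * (∫ s in (0:ℝ)..t, ftilde s) < ftilde t * t ∧
      ftilde t * t ≤ V₀ / 2 * t ^ 2 :=
  stmt2_general f hf h0 hsup V₀ a₁ ha hV ftilde hdef
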